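/- arXiv:1202.3903 — 7 statements merged into one kernel-verified Lean document; each statement's English description precedes it below -/
import Mathlib

section
/- Let U be unitary on a Hilbert space H, φ a unit vector, and Ũ = (1 − |φ⟩⟨φ|)U. Then for every n ≥ 1, 1 = Σ_{k=1}^n |a_k|² + ‖Ũⁿφ‖², where a_k = ⟨φ, U Ũ^{k−1} φ⟩. Consequently the return probability R = Σ_{n≥1}|a_n|² = 1 − lim_{n→∞} ‖Ũⁿφ‖², and the limit exists. -/
/-!
Since `U` is isometric and `φ` is a unit vector, removing the `φ`-component of `Uψ` is an
orthogonal decomposition, so `‖Ũψ‖² = ‖ψ‖² - |⟨φ, Uψ⟩|²`. Along the orbit `ψ = Ũᵏφ` this says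
that `|a_{k+1}|²` is exactly the drop of the survival probability `‖Ũᵏφ‖²`; the finite identity
telescopes, and the series follows from monotone convergence of the nonincreasing survival
probabilities.
-/

open Filter

theorem norm_sub_inner_smul_sq {𝕜 E : Type*} [RCLike 𝕜] [NormedAddCommGroup E]
    [InnerProductSpace 𝕜 E] {φ : E} (hφ : ‖φ‖ = 1) (v : E) :
    ‖v - inner 𝕜 φ v • φ‖ ^ 2 = ‖v‖ ^ 2 - ‖inner 𝕜 φ v‖ ^ 2 := by
  have hre : RCLike.re (inner 𝕜 v (inner 𝕜 φ v • φ)) = ‖inner 𝕜 φ v‖ ^ 2 := by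
    rw [inner_smul_right, ← inner_conj_symm, RCLike.conj_mul, RCLike.norm_conj, ← RCLike.ofReal_pow,
      RCLike.ofReal_re]
  rw [norm_sub_sq (𝕜 := 𝕜), hre, norm_smul, hφ, mul_one]
  ring

theorem Finset.sum_Icc_one_eq_sum_range {M : Type*} [AddCommMonoid M] (f : ℕ → M) (n : ℕ) :
    ∑ k ∈ Finset.Icc 1 n, f k = ∑ k ∈ Finset.range n, f (k + 1) := by
  rw [← Finset.Ico_add_one_right_eq_Icc, Finset.sum_Ico_eq_sum_range, Nat.add_sub_cancel]
  simp only [add_comm]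

theorem Antitone.hasSum_sub_succ {s : ℕ → ℝ} (hs : Antitone s) (hbdd : BddBelow (Set.range s)) :
    HasSum (fun k => s k - s (k + 1)) (s 0 - ⨅ n, s n) := by
  rw [hasSum_iff_tendsto_nat_of_nonneg fun k => sub_nonneg.2 (hs k.le_succ)]
  simp only [Finset.sum_range_sub']
  exact tendsto_const_nhds.sub (tendsto_atTop_ciInf hs hbdd)

theorem first_arrival_decomposition_general
    {H : Type*} [NormedAddCommGroup H] [InnerProductSpace ℂ H]
    (U : H ≃ₗᵢ[ℂ] H) (φ : H) (hφ : ‖φ‖ = 1)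
    (Ut : H → H) (hUt : ∀ ψ, Ut ψ = U ψ - (inner ℂ φ (U ψ) : ℂ) • φ)
    (a : ℕ → ℂ) (ha : ∀ k, a (k + 1) = (inner ℂ φ (U (Ut^[k] φ)) : ℂ)) :
    (∀ n, 1 ≤ n →
        (1 : ℝ) = ∑ k ∈ Finset.Icc 1 n, ‖a k‖ ^ 2 + ‖Ut^[n] φ‖ ^ 2) ∧
      ∃ L : ℝ, Tendsto (fun n => ‖Ut^[n] φ‖ ^ 2) atTop (nhds L) ∧
        (∑' n : ℕ, ‖a (n + 1)‖ ^ 2) = 1 - L := by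
  set s : ℕ → ℝ := fun n => ‖Ut^[n] φ‖ ^ 2
  have hs0 : s 0 = 1 := by simp [s, hφ]
  have hdrop : ∀ k, ‖a (k + 1)‖ ^ 2 = s k - s (k + 1) := fun k => by
    simp only [s, Function.iterate_succ_apply', hUt, norm_sub_inner_smul_sq hφ, U.norm_map, ha k]
    ring
  have hanti : Antitone s :=
    antitone_nat_of_succ_le fun k => sub_nonneg.1 (hdrop k ▸ sq_nonneg _)
  have hbdd : BddBelow (Set.range s) := ⟨0, by rintro _ ⟨n, rfl⟩; positivity⟩
  refine ⟨fun n _ => ?_, ⨅ n, s n, tendsto_atTop_ciInf hanti hbdd, ?_⟩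
  · rw [Finset.sum_Icc_one_eq_sum_range, Finset.sum_congr rfl fun k _ => hdrop k,
      Finset.sum_range_sub', hs0]
    ring
  · rw [funext hdrop, (hanti.hasSum_sub_succ hbdd).tsum_eq, hs0]

/-- **Survival probability decomposition and return probability.**
Let `U` be unitary on a complex Hilbert space `H`, `φ` a unit vector, and
`Ũ = (1 - |φ⟩⟨φ|)U`, i.e. `Ũψ = Uψ - ⟨φ, Uψ⟩ φ`.  With first arrival amplitudes
`a k = ⟨φ, U Ũ^{k-1} φ⟩` (for `k ≥ 1`) one has, for every `n ≥ 1`,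
`1 = ∑_{k=1}^n |a k|² + ‖Ũⁿφ‖²`.  Consequently `lim_n ‖Ũⁿφ‖²` exists and the
return probability satisfies `R = ∑_{n≥1} |a n|² = 1 - lim_n ‖Ũⁿφ‖²`. -/
theorem first_arrival_decomposition
    {H : Type*} [NormedAddCommGroup H] [InnerProductSpace ℂ H] [CompleteSpace H]
    (U : H ≃ₗᵢ[ℂ] H) (φ : H) (hφ : ‖φ‖ = 1)
    (Ut : H → H) (hUt : ∀ ψ, Ut ψ = U ψ - (inner ℂ φ (U ψ) : ℂ) • φ)
    (a : ℕ → ℂ) (ha : ∀ k, a (k + 1) = (inner ℂ φ (U (Ut^[k] φ)) : ℂ)) :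
    (∀ n, 1 ≤ n →
        (1 : ℝ) = ∑ k ∈ Finset.Icc 1 n, ‖a k‖ ^ 2 + ‖Ut^[n] φ‖ ^ 2) ∧
      ∃ L : ℝ, Tendsto (fun n => ‖Ut^[n] φ‖ ^ 2) atTop (nhds L) ∧
        (∑' n : ℕ, ‖a (n + 1)‖ ^ 2) = 1 - L :=
  first_arrival_decomposition_general U φ hφ Ut hUt a ha
end

section
/- Let U be unitary with cyclic unit vector φ, Ũ = (1 − |φ⟩⟨φ|)U, G(z) = (1 − zU)⁻¹ and G̃(z) = (1 − zŨ)⁻¹ for |z| < 1. Then G̃(z)φ = G(z)φ / μ̂(z), where μ̂(z) = 1 + z⟨φ, U G(z)φ⟩ = ⟨φ, G(z)φ⟩ is the Stieltjes function of the spectral measure of (U, φ). -/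
/-!
Since `(1 - zU) G(z)φ = φ` and `1 - zŨ = (1 - zU) + z |φ⟩⟨φ|U`, the vector `G(z)φ` is mapped by
`1 - zŨ` to `(1 + z⟨φ, U G(z)φ⟩) φ = μ̂(z) φ`; applying `G̃(z)` gives the formula once
`μ̂(z) ≠ 0`. Writing `g = G(z)φ`, one has `μ̂(z) = ⟨g - zUg, g⟩`, whose real part is at least
`(1 - |z|) ‖g‖² > 0` because `U` is an isometry.
-/

open scoped InnerProductSpace

section RankOnePerturbation

variable {𝕜 E : Type*} [RCLike 𝕜] [NormedAddCommGroup E] [InnerProductSpace 𝕜 E]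

open RCLike

theorem re_inner_sub_smul_self_pos {x y : E} {z : 𝕜} (hx : x ≠ 0) (hy : ‖y‖ ≤ ‖x‖)
    (hz : ‖z‖ < 1) : 0 < re ⟪x - z • y, x⟫_𝕜 := by
  have hcross : re ⟪z • y, x⟫_𝕜 ≤ ‖z‖ * ‖x‖ ^ 2 :=
    calc re ⟪z • y, x⟫_𝕜 ≤ ‖z • y‖ * ‖x‖ := re_inner_le_norm _ _
      _ ≤ ‖z‖ * ‖x‖ ^ 2 := by rw [norm_smul, sq, ← mul_assoc]; gcongr
  have hx2 : 0 < ‖x‖ ^ 2 := by positivity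
  rw [inner_sub_left, map_sub, inner_self_eq_norm_sq]
  nlinarith

theorem inner_eq_one_add_of_sub_smul_eq {φ g v : E} {z : 𝕜} (hφ : ‖φ‖ = 1)
    (hg : g - z • v = φ) : ⟪φ, g⟫_𝕜 = 1 + z * ⟪φ, v⟫_𝕜 := by
  rw [sub_eq_iff_eq_add.mp hg, inner_add_right, inner_smul_right, inner_self_eq_norm_sq_to_K, hφ]
  simp

theorem sub_smul_sub_inner_smul_eq_inner_smul {φ g v : E} {z : 𝕜} (hφ : ‖φ‖ = 1)
    (hg : g - z • v = φ) : g - z • (v - ⟪φ, v⟫_𝕜 • φ) = ⟪φ, g⟫_𝕜 • φ := by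
  rw [inner_eq_one_add_of_sub_smul_eq hφ hg, sub_eq_iff_eq_add.mp hg]
  module

end RankOnePerturbation

theorem krein_resolvent_formula_general
    {H : Type*} [NormedAddCommGroup H] [InnerProductSpace ℂ H] [CompleteSpace H]
    (U : H →L[ℂ] H) (hU : U ∈ unitary (H →L[ℂ] H))
    (φ : H) (hφ : ‖φ‖ = 1)
    (z : ℂ) (hz : ‖z‖ < 1)
    (Ut G Gt : H →L[ℂ] H)
    (hUt : ∀ x, Ut x = U x - (inner ℂ φ (U x) : ℂ) • φ)
    (hG : (1 - z • U) * G = 1 ∧ G * (1 - z • U) = 1)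
    (hGt : (1 - z • Ut) * Gt = 1 ∧ Gt * (1 - z • Ut) = 1) :
    Gt φ = ((inner ℂ φ (G φ) : ℂ))⁻¹ • G φ ∧
      (inner ℂ φ (G φ) : ℂ) = 1 + z * (inner ℂ φ (U (G φ)) : ℂ) := by
  have hGφ : G φ - z • U (G φ) = φ := by simpa using congrArg (· φ) hG.1
  refine ⟨?_, inner_eq_one_add_of_sub_smul_eq hφ hGφ⟩
  have hGφ_ne : G φ ≠ 0 := by
    rintro h
    rw [h, map_zero, smul_zero, sub_zero, eq_comm, ← norm_eq_zero, hφ] at hGφ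
    exact one_ne_zero hGφ
  have hμ_ne : ⟪φ, G φ⟫_ℂ ≠ 0 := by
    have hre := re_inner_sub_smul_self_pos hGφ_ne (U.norm_map_of_mem_unitary hU _).le hz
    rw [hGφ] at hre
    exact fun h => by simp [h] at hre
  have hAtG : (1 - z • Ut) (G φ) = ⟪φ, G φ⟫_ℂ • φ := by
    simpa [hUt] using sub_smul_sub_inner_smul_eq_inner_smul hφ hGφ
  calc Gt φ = Gt ((⟪φ, G φ⟫_ℂ)⁻¹ • (1 - z • Ut) (G φ)) := by rw [hAtG, inv_smul_smul₀ hμ_ne]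
    _ = (Gt * (1 - z • Ut)) ((⟪φ, G φ⟫_ℂ)⁻¹ • G φ) := by rw [map_smul, map_smul]; rfl
    _ = (⟪φ, G φ⟫_ℂ)⁻¹ • G φ := by rw [hGt.2]; rfl

/-- **Resolvent (Krein) formula for the rank-one absorbing perturbation.**
Let `U` be unitary on a complex Hilbert space `H` with cyclic unit vector `φ`,
`Ũ = (1 - |φ⟩⟨φ|)U`, and for `|z| < 1` let `G(z) = (1 - zU)⁻¹` and
`G̃(z) = (1 - zŨ)⁻¹` (given here as two-sided inverses).  Then
`G̃(z)φ = G(z)φ / μ̂(z)` where `μ̂(z) = ⟨φ, G(z)φ⟩ = 1 + z⟨φ, U G(z)φ⟩` is the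
Stieltjes function of the spectral measure of `(U, φ)`. -/
theorem krein_resolvent_formula
    {H : Type*} [NormedAddCommGroup H] [InnerProductSpace ℂ H] [CompleteSpace H]
    (U : H →L[ℂ] H) (hU : U ∈ unitary (H →L[ℂ] H))
    (φ : H) (hφ : ‖φ‖ = 1)
    (hcyc : ∀ ψ : H, ψ ∈ (Submodule.span ℂ {χ : H | ∃ n : ℕ, χ = (U ^ n) φ}).topologicalClosure)
    (z : ℂ) (hz : ‖z‖ < 1)
    (Ut G Gt : H →L[ℂ] H)
    (hUt : ∀ x, Ut x = U x - (inner ℂ φ (U x) : ℂ) • φ)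
    (hG : (1 - z • U) * G = 1 ∧ G * (1 - z • U) = 1)
    (hGt : (1 - z • Ut) * Gt = 1 ∧ Gt * (1 - z • Ut) = 1) :
    Gt φ = ((inner ℂ φ (G φ) : ℂ))⁻¹ • G φ ∧
      (inner ℂ φ (G φ) : ℂ) = 1 + z * (inner ℂ φ (U (G φ)) : ℂ) :=
  krein_resolvent_formula_general U hU φ hφ z hz Ut G Gt hUt hG hGt
end

section
/- With a_n = ⟨φ, U Ũ^{n−1} φ⟩ the first arrival amplitudes of a unitary U with unit vector φ, the generating function â(z) = Σ_{n≥1} a_n zⁿ satisfies â(z) = (μ̂(z) − 1)/μ̂(z) = 1 − 1/μ̂(z) for |z| < 1, where μ̂(z) = Σ_{n≥0} ⟨φ, Uⁿφ⟩ zⁿ. -/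
/-!
Write `Ũ = P U` with `P` the orthogonal projection onto `φᗮ`. Both `U` and `Ũ` are contractions,
so for `|z| < 1` the Neumann series `ψ = (1 - zU)⁻¹ φ` and `ξ = (1 - zŨ)⁻¹ φ` converge, with
`μ̂(z) = ⟪φ, ψ⟫` and `â(z) = z ⟪φ, U ξ⟫`. Since `P` kills `φ`, `⟪φ, ξ⟫ = 1`, while
`(1 - zU) ξ = (1 - â(z)) φ`; as `1 - zU` is injective, `ξ = (1 - â(z)) ψ`, and pairing with `φ`
gives the renewal identity `(1 - â(z)) μ̂(z) = 1`.
-/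

open scoped InnerProductSpace

namespace ContinuousLinearMap

variable {𝕜 E : Type*} [NontriviallyNormedField 𝕜] [NormedAddCommGroup E] [NormedSpace 𝕜 E]
  {T : E →L[𝕜] E} {z : 𝕜}

theorem norm_iterate_apply_le (hT : ‖T‖ ≤ 1) (x : E) (n : ℕ) : ‖T^[n] x‖ ≤ ‖x‖ := by
  induction n with
  | zero => rfl
  | succ n ih =>
    rw [Function.iterate_succ_apply']
    exact (T.le_of_opNorm_le hT _).trans (by rwa [one_mul])

theorem summable_pow_smul_iterate [CompleteSpace E] (hT : ‖T‖ ≤ 1) (hz : ‖z‖ < 1) (x : E) :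
    Summable fun n : ℕ => z ^ n • T^[n] x := by
  refine .of_norm_bounded ((summable_geometric_of_lt_one (norm_nonneg z) hz).mul_right ‖x‖)
    fun n => ?_
  rw [norm_smul, norm_pow]
  exact mul_le_mul_of_nonneg_left (T.norm_iterate_apply_le hT x n) (by positivity)

theorem tsum_pow_smul_iterate_eq_add {x : E} (hsum : Summable fun n : ℕ => z ^ n • T^[n] x) :
    ∑' n : ℕ, z ^ n • T^[n] x = x + z • T (∑' n : ℕ, z ^ n • T^[n] x) := by
  rw [← smul_apply, (z • T).map_tsum hsum]
  conv_lhs => rw [hsum.tsum_eq_zero_add]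
  congr 1
  · simp
  · refine tsum_congr fun n => ?_
    rw [Function.iterate_succ_apply', pow_succ', mul_smul]
    simp [smul_comm z]

theorem eq_zero_of_eq_smul_apply (hT : ‖T‖ ≤ 1) (hz : ‖z‖ < 1) {w : E} (hw : w = z • T w) :
    w = 0 := by
  have hle : ‖w‖ ≤ ‖z‖ * ‖w‖ := by
    conv_lhs => rw [hw]
    rw [norm_smul]
    exact mul_le_mul_of_nonneg_left (by simpa using T.le_of_opNorm_le hT w) (norm_nonneg z)
  exact norm_le_zero_iff.mp (by nlinarith [norm_nonneg w])

end ContinuousLinearMap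

section Renewal

variable {𝕜 E : Type*} [RCLike 𝕜] [NormedAddCommGroup E] [InnerProductSpace 𝕜 E]

theorem starProjection_orthogonal_singleton_apply {φ : E} (hφ : ‖φ‖ = 1) (x : E) :
    (𝕜 ∙ φ)ᗮ.starProjection x = x - ⟪φ, x⟫_𝕜 • φ := by
  rw [Submodule.starProjection_orthogonal', sub_apply,
    Submodule.starProjection_singleton, hφ]
  simp

theorem inner_starProjection_orthogonal_singleton (φ x : E) :
    ⟪φ, (𝕜 ∙ φ)ᗮ.starProjection x⟫_𝕜 = 0 :=
  Submodule.mem_orthogonal_singleton_iff_inner_right.mp (Submodule.starProjection_apply_mem _ x)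

theorem renewal_identity {V : E →L[𝕜] E} (hV : ‖V‖ ≤ 1) {φ : E} (hφ : ‖φ‖ = 1) {z : 𝕜}
    (hz : ‖z‖ < 1) {ψ ξ : E} (hψ : ψ = φ + z • V ψ)
    (hξ : ξ = φ + z • (𝕜 ∙ φ)ᗮ.starProjection (V ξ)) :
    (1 - z * ⟪φ, V ξ⟫_𝕜) * ⟪φ, ψ⟫_𝕜 = 1 := by
  set c := 1 - z * ⟪φ, V ξ⟫_𝕜
  have hφφ : ⟪φ, φ⟫_𝕜 = 1 := by simp [inner_self_eq_norm_sq_to_K, hφ]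
  have hξφ : ⟪φ, ξ⟫_𝕜 = 1 := by
    rw [hξ, inner_add_right, inner_smul_right, inner_starProjection_orthogonal_singleton, hφφ]
    ring
  have hξψ : ξ = c • ψ := by
    rw [← sub_eq_zero]
    refine V.eq_zero_of_eq_smul_apply hV hz ?_
    nth_rewrite 1 [hξ, hψ]
    rw [starProjection_orthogonal_singleton_apply hφ, map_sub, map_smul]
    module
  rw [← inner_smul_right, ← hξψ, hξφ]

end Renewal

/-- **Quantum renewal equation.**  Let `U` be unitary on a complex Hilbert space,
`φ` a unit vector, `Ũ = (1 - |φ⟩⟨φ|)U`, and let `a n = ⟨φ, U Ũ^{n-1} φ⟩` be the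
first arrival amplitudes.  Then for `|z| < 1` the generating function
`â(z) = ∑_{n≥1} a n zⁿ` satisfies `â(z) = (μ̂(z) - 1)/μ̂(z) = 1 - 1/μ̂(z)`,
where `μ̂(z) = ∑_{n≥0} ⟨φ, Uⁿφ⟩ zⁿ` is the Stieltjes function. -/
theorem quantum_renewal_equation
    {H : Type*} [NormedAddCommGroup H] [InnerProductSpace ℂ H] [CompleteSpace H]
    (U : H ≃ₗᵢ[ℂ] H) (φ : H) (hφ : ‖φ‖ = 1)
    (Ut : H → H) (hUt : ∀ ψ, Ut ψ = U ψ - (inner ℂ φ (U ψ) : ℂ) • φ)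
    (a : ℕ → ℂ) (ha : ∀ k, a (k + 1) = (inner ℂ φ (U (Ut^[k] φ)) : ℂ))
    (z : ℂ) (hz : ‖z‖ < 1) :
    (∑' n : ℕ, a (n + 1) * z ^ (n + 1)) =
        ((∑' n : ℕ, (inner ℂ φ ((⇑U)^[n] φ) : ℂ) * z ^ n) - 1) /
          (∑' n : ℕ, (inner ℂ φ ((⇑U)^[n] φ) : ℂ) * z ^ n) ∧
      (∑' n : ℕ, a (n + 1) * z ^ (n + 1)) =
        1 - (∑' n : ℕ, (inner ℂ φ ((⇑U)^[n] φ) : ℂ) * z ^ n)⁻¹ := by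
  set V : H →L[ℂ] H := U.toLinearIsometry.toContinuousLinearMap
  set T := (ℂ ∙ φ)ᗮ.starProjection ∘L V
  obtain rfl : Ut = T := funext fun ψ => by
    rw [hUt, ContinuousLinearMap.comp_apply, starProjection_orthogonal_singleton_apply hφ]; rfl
  have hV : ‖V‖ ≤ 1 := U.toLinearIsometry.norm_toContinuousLinearMap_le
  have hT : ‖T‖ ≤ 1 :=
    (ContinuousLinearMap.opNorm_comp_le _ _).trans
      (mul_le_one₀ (Submodule.starProjection_norm_le _) (norm_nonneg _) hV)
  have hψ := V.summable_pow_smul_iterate hV hz φ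
  have hξ := T.summable_pow_smul_iterate hT hz φ
  have hμ : ∑' n : ℕ, (inner ℂ φ ((⇑U)^[n] φ) : ℂ) * z ^ n
      = ⟪φ, ∑' n : ℕ, z ^ n • V^[n] φ⟫_ℂ := by
    rw [← innerSL_apply_apply, (innerSL ℂ φ).map_tsum hψ]
    simp only [innerSL_apply_apply, inner_smul_right, mul_comm]
    rfl
  have hA : ∑' n : ℕ, a (n + 1) * z ^ (n + 1) = z * ⟪φ, V (∑' n : ℕ, z ^ n • T^[n] φ)⟫_ℂ := by
    rw [V.map_tsum hξ, ← innerSL_apply_apply, (innerSL ℂ φ).map_tsum (hξ.mapL V),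
      ← tsum_mul_left]
    refine tsum_congr fun n => ?_
    rw [show a (n + 1) = ⟪φ, V (T^[n] φ)⟫_ℂ from ha n]
    simp only [innerSL_apply_apply, map_smul]
    ring
  have hrenewal := renewal_identity hV hφ hz (ContinuousLinearMap.tsum_pow_smul_iterate_eq_add hψ)
    (ContinuousLinearMap.tsum_pow_smul_iterate_eq_add hξ)
  rw [← hμ, ← hA] at hrenewal
  have hμ0 := right_ne_zero_of_mul_eq_one hrenewal
  constructor <;> field_simp <;> linear_combination -hrenewal
end

section
/- Let a_1, a_2 ∈ ℂ be the first two Taylor-type coefficients of first arrival amplitudes of some unitary pair (U, φ). Then (1 − |a_1|²)² ≥ |a_2|². Moreover, the set of achievable sequences (|a_1|², |a_2|², ...) of first return probabilities is not convex. -/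
/-- The first arrival amplitude `a_{n+1} = ⟨φ, U Ũⁿ φ⟩`, where
`Ũ = (1 - |φ⟩⟨φ|)U` is the absorbing (monitored) evolution. -/
noncomputable def firstArrival {H : Type*} [NormedAddCommGroup H]
    [InnerProductSpace ℂ H] (U : H ≃ₗᵢ[ℂ] H) (φ : H) (n : ℕ) : ℂ :=
  (inner ℂ φ (U ((fun ψ => U ψ - (inner ℂ φ (U ψ) : ℂ) • φ)^[n] φ)) : ℂ)

/-- A sequence `s` of first return probabilities is achievable if it arises from
some unitary pair `(U, φ)` as `s n = |a_{n+1}|²`. -/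
def AchievableReturnProbs (s : ℕ → ℝ) : Prop :=
  ∃ (H : Type) (_ : NormedAddCommGroup H) (_ : InnerProductSpace ℂ H)
    (_ : CompleteSpace H) (U : H ≃ₗᵢ[ℂ] H) (φ : H),
    ‖φ‖ = 1 ∧ ∀ n, s n = ‖firstArrival U φ n‖ ^ 2

/-!
Write `a₁ = ⟪φ, Uφ⟫` and `w = Uφ - a₁φ`, the part of `Uφ` that survives the first
measurement, so that `a₂ = ⟪φ, Uw⟫` with `w ⊥ φ` and `‖w‖² = 1 - |a₁|²`. Since `U` is unitary,
`Uw ⊥ Uφ`, hence `a₂ = ⟪P, Uw⟫` where `P = φ - ⟪Uφ, φ⟫Uφ` also has `‖P‖² = 1 - |a₁|²`, and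
Cauchy–Schwarz gives `|a₂| ≤ 1 - |a₁|²`.

The sequences `(1, 0, 0, …)` (identity on `ℂ`) and `(0, 1, 0, …)` (swap on `ℂ²`) are
achievable, but their midpoint has `|a₁|² = |a₂|² = 1/2`, violating `|a₂|² ≤ (1 - |a₁|²)²`.
-/

open scoped InnerProductSpace

section UnitVector

variable {H : Type*} [NormedAddCommGroup H] [InnerProductSpace ℂ H] {y : H}

theorem inner_sub_inner_smul_self_eq_zero (hy : ‖y‖ = 1) (x : H) :
    ⟪y, x - ⟪y, x⟫_ℂ • y⟫_ℂ = 0 := by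
  rw [inner_sub_right, inner_smul_right, inner_self_eq_norm_sq_to_K, hy]
  simp

theorem norm_sub_inner_smul_sq_s11 (hy : ‖y‖ = 1) (x : H) :
    ‖x - ⟪y, x⟫_ℂ • y‖ ^ 2 = ‖x‖ ^ 2 - ‖⟪y, x⟫_ℂ‖ ^ 2 := by
  have hperp : ⟪x - ⟪y, x⟫_ℂ • y, ⟪y, x⟫_ℂ • y⟫_ℂ = 0 := by
    rw [inner_smul_right, ← inner_conj_symm (x - ⟪y, x⟫_ℂ • y) y,
      inner_sub_inner_smul_self_eq_zero hy, map_zero, mul_zero]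
  have := norm_add_sq_eq_norm_sq_add_norm_sq_of_inner_eq_zero _ _ hperp
  rw [sub_add_cancel, norm_smul, hy, mul_one] at this
  linarith

end UnitVector

section FirstArrival

variable {H : Type*} [NormedAddCommGroup H] [InnerProductSpace ℂ H]

noncomputable def absorbedStep (U : H ≃ₗᵢ[ℂ] H) (φ : H) (ψ : H) : H :=
  U ψ - ⟪φ, U ψ⟫_ℂ • φ

variable (U : H ≃ₗᵢ[ℂ] H) {φ : H}

theorem firstArrival_eq_inner_iterate (n : ℕ) :
    firstArrival U φ n = ⟪φ, U ((absorbedStep U φ)^[n] φ)⟫_ℂ :=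
  rfl

theorem absorbedStep_zero : absorbedStep U φ 0 = 0 := by
  simp [absorbedStep]

theorem firstArrival_eq_zero_of_iterate_eq_zero {k n : ℕ}
    (hk : (absorbedStep U φ)^[k] φ = 0) (hkn : k ≤ n) : firstArrival U φ n = 0 := by
  obtain ⟨m, rfl⟩ := Nat.exists_eq_add_of_le hkn
  rw [firstArrival_eq_inner_iterate, add_comm, Function.iterate_add_apply, hk,
    Function.iterate_fixed (absorbedStep_zero U)]
  simp

theorem norm_firstArrival_one_le (hφ : ‖φ‖ = 1) :
    ‖firstArrival U φ 1‖ ≤ 1 - ‖firstArrival U φ 0‖ ^ 2 := by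
  have hUφ : ‖U φ‖ = 1 := by rw [U.norm_map, hφ]
  set a₁ := firstArrival U φ 0
  set w := absorbedStep U φ φ
  set P := φ - ⟪U φ, φ⟫_ℂ • U φ
  have hw : ‖w‖ ^ 2 = 1 - ‖a₁‖ ^ 2 := by
    change ‖U φ - ⟪φ, U φ⟫_ℂ • φ‖ ^ 2 = _
    rw [norm_sub_inner_smul_sq_s11 hφ, hUφ, one_pow]
    rfl
  have hP : ‖P‖ ^ 2 = 1 - ‖a₁‖ ^ 2 := by
    rw [norm_sub_inner_smul_sq_s11 hUφ, hφ, one_pow, norm_inner_symm]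
    rfl
  have horth : ⟪U φ, U w⟫_ℂ = 0 := by
    rw [U.inner_map_map]
    exact inner_sub_inner_smul_self_eq_zero hφ _
  have ha₂ : ‖firstArrival U φ 1‖ = ‖⟪P, U w⟫_ℂ‖ := by
    rw [inner_sub_left, inner_smul_left, horth, mul_zero, sub_zero]
    rfl
  have hPw : ‖P‖ = ‖w‖ := (sq_eq_sq₀ (norm_nonneg _) (norm_nonneg _)).1 (hP.trans hw.symm)
  calc ‖firstArrival U φ 1‖ = ‖⟪P, U w⟫_ℂ‖ := ha₂
    _ ≤ ‖P‖ * ‖U w‖ := norm_inner_le_norm _ _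
    _ = 1 - ‖a₁‖ ^ 2 := by rw [U.norm_map, hPw, ← sq, hw]

theorem norm_firstArrival_one_sq_le (hφ : ‖φ‖ = 1) :
    ‖firstArrival U φ 1‖ ^ 2 ≤ (1 - ‖firstArrival U φ 0‖ ^ 2) ^ 2 :=
  pow_le_pow_left₀ (norm_nonneg _) (norm_firstArrival_one_le U hφ) 2

end FirstArrival

namespace AchievableReturnProbs

theorem le_one_sub_sq {s : ℕ → ℝ} (hs : AchievableReturnProbs s) : s 1 ≤ (1 - s 0) ^ 2 := by
  obtain ⟨H, _, _, _, U, φ, hφ, hsφ⟩ := hs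
  rw [hsφ, hsφ]
  exact norm_firstArrival_one_sq_le U hφ

theorem single_zero : AchievableReturnProbs (Pi.single 0 1) := by
  refine ⟨ℂ, inferInstance, inferInstance, inferInstance, LinearIsometryEquiv.refl ℂ ℂ, 1,
    norm_one, fun n => ?_⟩
  have hkill : (absorbedStep (LinearIsometryEquiv.refl ℂ ℂ) 1)^[1] 1 = 0 := by
    simp [absorbedStep]
  rcases n with _ | n
  · simp [firstArrival_eq_inner_iterate]
  · rw [firstArrival_eq_zero_of_iterate_eq_zero _ hkill (Nat.le_add_left 1 n)]
    simp

theorem single_one : AchievableReturnProbs (Pi.single 1 1) := by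
  let U : EuclideanSpace ℂ (Fin 2) ≃ₗᵢ[ℂ] EuclideanSpace ℂ (Fin 2) :=
    LinearIsometryEquiv.piLpCongrLeft 2 ℂ ℂ (Equiv.swap 0 1)
  let e (i : Fin 2) : EuclideanSpace ℂ (Fin 2) := EuclideanSpace.single i 1
  have hU (i : Fin 2) : U (e i) = e (Equiv.swap 0 1 i) :=
    EuclideanSpace.piLpCongrLeft_single _ _ _
  have hnorm (i : Fin 2) : ‖e i‖ = 1 := by simp [e]
  have horth : ⟪e 0, e 1⟫_ℂ = 0 := by simp [e, EuclideanSpace.inner_single_left]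
  have hstep0 : absorbedStep U (e 0) (e 0) = e 1 := by
    simp [absorbedStep, hU, horth]
  have hstep1 : absorbedStep U (e 0) (e 1) = 0 := by
    simp [absorbedStep, hU, hnorm]
  refine ⟨_, inferInstance, inferInstance, inferInstance, U, e 0, hnorm 0, fun n => ?_⟩
  match n with
  | 0 => simp [firstArrival_eq_inner_iterate, hU, horth]
  | 1 => simp [firstArrival_eq_inner_iterate, hstep0, hU, hnorm]
  | n + 2 =>
    have hkill : (absorbedStep U (e 0))^[2] (e 0) = 0 := by
      simp [hstep0, hstep1]
    rw [firstArrival_eq_zero_of_iterate_eq_zero _ hkill (Nat.le_add_left 2 n)]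
    simp

end AchievableReturnProbs

/-- **Constraints on first return probabilities.**  For any unitary pair `(U, φ)`
with `‖φ‖ = 1`, the first two arrival amplitudes `a₁, a₂` satisfy
`(1 - |a₁|²)² ≥ |a₂|²`; moreover the set of achievable sequences of first return
probabilities `(|a₁|², |a₂|², …)` is not convex. -/
theorem first_return_constraints :
    (∀ (H : Type*) (_ : NormedAddCommGroup H) (_ : InnerProductSpace ℂ H)
        (_ : CompleteSpace H) (U : H ≃ₗᵢ[ℂ] H) (φ : H), ‖φ‖ = 1 →
        (1 - ‖firstArrival U φ 0‖ ^ 2) ^ 2 ≥ ‖firstArrival U φ 1‖ ^ 2) ∧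
      ¬ Convex ℝ {s : ℕ → ℝ | AchievableReturnProbs s} := by
  refine ⟨fun H _ _ _ U φ hφ => norm_firstArrival_one_sq_le U hφ, fun hconv => ?_⟩
  have hmid := (hconv AchievableReturnProbs.single_zero AchievableReturnProbs.single_one
    (by norm_num : (0 : ℝ) ≤ 1 / 2) (by norm_num : (0 : ℝ) ≤ 1 / 2) (by norm_num)).le_one_sub_sq
  norm_num at hmid
end

section
/- Let μ be a probability measure on S¹ whose pure point part has positive total mass. Then the SJK expected return time τ^{SJK} = Σ_n n q_n^{SJK} is finite, where q_n^{SJK} = p_n ∏_{k=1}^{n−1}(1 − p_k) and p_n = |μ_n|² with μ_n the n-th Fourier coefficient of μ. -/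
open MeasureTheory

noncomputable instance : MeasurableSpace Circle := borel Circle
instance : BorelSpace Circle := ⟨rfl⟩

/-!
An atom of mass `c` at `u` makes the Toeplitz form large: with `T z = ∑_{k<n} (z u⁻¹)ᵏ` we have
`c n² = c |T u|² ≤ ∫ |T|² dμ = ∑_{j,k<n} u^{k-j} μ̂(j-k)`, so `c n² ≤ ∑_{j,k<n} |μ̂(j-k)|`.
Cauchy–Schwarz and the fact that each row `j - k` (`k < n`) runs through `n` distinct integers of
`(-n, n)` then give the quantitative Wiener bound `c² n ≤ 1 + 2 ∑_{0<m<n} |μ̂ m|²`. Hence the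
partial sums of `p` grow linearly, `∏_{0<k<n} (1 - p k) ≤ exp (-∑_{0<k<n} p k)` decays
geometrically, and `∑ n q n` converges.
-/

open Finset
open scoped ComplexConjugate

lemma prod_one_sub_le_exp_neg_sum {ι : Type*} (s : Finset ι) {p : ι → ℝ}
    (hp : ∀ i ∈ s, p i ≤ 1) : ∏ i ∈ s, (1 - p i) ≤ Real.exp (-∑ i ∈ s, p i) := by
  rw [← sum_neg_distrib, Real.exp_sum]
  exact prod_le_prod (fun i hi => by linarith [hp i hi])
    fun i _ => by linarith [Real.add_one_le_exp (-p i)]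

lemma summable_nat_mul_mul_prod_one_sub {p : ℕ → ℝ} (hp0 : ∀ n, 0 ≤ p n) (hp1 : ∀ n, p n ≤ 1)
    {a b : ℝ} (ha : 0 < a) (hlin : ∀ n : ℕ, a * n - b ≤ ∑ k ∈ Ico 1 n, p k) :
    Summable fun n : ℕ => (n : ℝ) * (p n * ∏ k ∈ Ico 1 n, (1 - p k)) := by
  refine Summable.of_nonneg_of_le (fun n => ?_) (fun n => ?_)
    ((Real.summable_pow_mul_exp_neg_nat_mul 1 ha).mul_left (Real.exp b))
  · exact mul_nonneg n.cast_nonneg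
      (mul_nonneg (hp0 n) (prod_nonneg fun k _ => sub_nonneg.2 (hp1 k)))
  · have hprod : ∏ k ∈ Ico 1 n, (1 - p k) ≤ Real.exp b * Real.exp (-a * n) := by
      calc ∏ k ∈ Ico 1 n, (1 - p k) ≤ Real.exp (-∑ k ∈ Ico 1 n, p k) :=
            prod_one_sub_le_exp_neg_sum _ fun k _ => hp1 k
        _ ≤ Real.exp (b + -a * n) := Real.exp_le_exp.2 (by linarith [hlin n])
        _ = Real.exp b * Real.exp (-a * n) := Real.exp_add _ _
    calc (n : ℝ) * (p n * ∏ k ∈ Ico 1 n, (1 - p k))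
        ≤ n * (1 * (Real.exp b * Real.exp (-a * n))) := by
          gcongr
          · exact prod_nonneg fun k _ => sub_nonneg.2 (hp1 k)
          · exact hp1 n
      _ = Real.exp b * ((n : ℝ) ^ 1 * Real.exp (-a * n)) := by ring

lemma sum_range_sum_range_sub_le_of_even {H : ℤ → ℝ} (hH : ∀ m, 0 ≤ H m) (heven : H.Even)
    (N : ℕ) : ∑ j ∈ range (N + 1), ∑ k ∈ range (N + 1), H (j - k)
      ≤ (N + 1) * (2 * ∑ m ∈ range (N + 1), H m - H 0) := by
  have hrow : ∀ j ∈ range (N + 1),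
      ∑ k ∈ range (N + 1), H (j - k) ≤ ∑ m ∈ Icc (-N : ℤ) N, H m := by
    intro j hj
    rw [mem_range] at hj
    rw [← sum_image (s := range (N + 1)) (g := fun k : ℕ => (j : ℤ) - k) (by simp [Set.InjOn])]
    exact sum_le_sum_of_subset_of_nonneg (by intro m; simp; omega) fun m _ _ => hH m
  calc _ ≤ ∑ _j ∈ range (N + 1), ∑ m ∈ Icc (-N : ℤ) N, H m := sum_le_sum hrow
    _ = _ := by
      rw [sum_const, card_range, nsmul_eq_mul, sum_Icc_of_even_eq_range heven, two_nsmul, two_mul]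
      push_cast; ring

lemma measureReal_singleton_mul_le_integral {α : Type*} [MeasurableSpace α]
    [MeasurableSingletonClass α] {μ : Measure α} {f : α → ℝ} (hf : Integrable f μ) (hf0 : 0 ≤ f)
    (x : α) : μ.real {x} * f x ≤ ∫ y, f y ∂μ := by
  calc μ.real {x} * f x = ∫ y in {x}, f y ∂μ := by rw [integral_singleton, smul_eq_mul]
    _ ≤ ∫ y, f y ∂μ := setIntegral_le_integral hf (Filter.Eventually.of_forall hf0)

-- The paper's sign convention `μ̂ m = ∫ zᵐ dμ`, not the more common `∫ z⁻ᵐ dμ`.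
noncomputable def fourierStieltjesCoeff (μ : Measure Circle) (m : ℤ) : ℂ :=
  ∫ z, (z : ℂ) ^ m ∂μ

section
variable (μ : Measure Circle)

lemma fourierStieltjesCoeff_natCast (n : ℕ) :
    fourierStieltjesCoeff μ n = ∫ z, (z : ℂ) ^ n ∂μ := by
  simp [fourierStieltjesCoeff]

lemma fourierStieltjesCoeff_zero [IsProbabilityMeasure μ] : fourierStieltjesCoeff μ 0 = 1 := by
  simp [fourierStieltjesCoeff]

lemma fourierStieltjesCoeff_neg (m : ℤ) :
    fourierStieltjesCoeff μ (-m) = conj (fourierStieltjesCoeff μ m) := by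
  rw [fourierStieltjesCoeff, fourierStieltjesCoeff, ← integral_conj]
  congr 1 with z
  rw [map_zpow₀, ← Circle.coe_inv_eq_conj, Circle.coe_inv, inv_zpow', zpow_neg]

lemma norm_fourierStieltjesCoeff_le_one [IsProbabilityMeasure μ] (m : ℤ) :
    ‖fourierStieltjesCoeff μ m‖ ≤ 1 := by
  calc ‖fourierStieltjesCoeff μ m‖ ≤ ∫ z, ‖(z : ℂ) ^ m‖ ∂μ := norm_integral_le_integral_norm _
    _ = 1 := by simp [Circle.norm_coe]

lemma norm_integral_mul_inv_zpow (u : Circle) (m : ℤ) :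
    ‖∫ z, (((z * u⁻¹) ^ m : Circle) : ℂ) ∂μ‖ = ‖fourierStieltjesCoeff μ m‖ := by
  simp_rw [mul_zpow, Circle.coe_mul, integral_mul_const, norm_mul, Circle.norm_coe, mul_one,
    fourierStieltjesCoeff, Circle.coe_zpow]

lemma coe_zpow_mul_conj_coe_zpow (w : Circle) (j k : ℤ) :
    ((w ^ j : Circle) : ℂ) * conj ((w ^ k : Circle) : ℂ) = ((w ^ (j - k) : Circle) : ℂ) := by
  rw [← Circle.coe_inv_eq_conj, ← Circle.coe_mul, ← zpow_neg, ← zpow_add, ← sub_eq_add_neg]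

lemma sq_mul_measureReal_singleton_le_sum_norm_fourierStieltjesCoeff [IsFiniteMeasure μ]
    (u : Circle) (n : ℕ) :
    (n : ℝ) ^ 2 * μ.real {u} ≤
      ∑ j ∈ range n, ∑ k ∈ range n, ‖fourierStieltjesCoeff μ (j - k)‖ := by
  set T : Circle → ℂ := fun z => ∑ k ∈ range n, (((z * u⁻¹) ^ (k : ℤ) : Circle) : ℂ)
  have hcont (m : ℤ) : Continuous fun z : Circle => (((z * u⁻¹) ^ m : Circle) : ℂ) :=
    continuous_subtype_val.comp (by fun_prop)
  have hint (m : ℤ) : Integrable (fun z : Circle => (((z * u⁻¹) ^ m : Circle) : ℂ)) μ :=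
    (hcont m).integrable_of_hasCompactSupport (HasCompactSupport.of_compactSpace _)
  have hTcont : Continuous T := continuous_finsetSum _ fun k _ => hcont k
  have hTint : Integrable (fun z => Complex.normSq (T z)) μ :=
    (Complex.continuous_normSq.comp hTcont).integrable_of_hasCompactSupport
      (HasCompactSupport.of_compactSpace _)
  have hTsq (z : Circle) : (Complex.normSq (T z) : ℂ) =
      ∑ j ∈ range n, ∑ k ∈ range n, (((z * u⁻¹) ^ ((j : ℤ) - k) : Circle) : ℂ) := by
    simp_rw [T, ← Complex.mul_conj, map_sum, sum_mul_sum, coe_zpow_mul_conj_coe_zpow]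
  calc (n : ℝ) ^ 2 * μ.real {u} = μ.real {u} * Complex.normSq (T u) := by simp [T]; ring
    _ ≤ ∫ z, Complex.normSq (T z) ∂μ :=
      measureReal_singleton_mul_le_integral hTint (fun z => Complex.normSq_nonneg _) u
    _ = ‖∫ z, (Complex.normSq (T z) : ℂ) ∂μ‖ := by
      rw [integral_complex_ofReal, Complex.norm_real, Real.norm_of_nonneg
        (integral_nonneg fun z => Complex.normSq_nonneg _)]
    _ = ‖∑ j ∈ range n, ∑ k ∈ range n, ∫ z, (((z * u⁻¹) ^ ((j : ℤ) - k) : Circle) : ℂ) ∂μ‖ := by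
      simp_rw [hTsq]
      rw [integral_finsetSum _ fun j _ => integrable_finsetSum _ fun k _ => hint _]
      simp_rw [integral_finsetSum _ fun k _ => hint _]
    _ ≤ ∑ j ∈ range n, ∑ k ∈ range n, ‖fourierStieltjesCoeff μ (j - k)‖ := by
      simp_rw [← norm_integral_mul_inv_zpow μ u]
      exact (norm_sum_le _ _).trans (sum_le_sum fun j _ => norm_sum_le _ _)

lemma sq_measureReal_singleton_mul_le_sum_sq_norm_fourierStieltjesCoeff
    [IsProbabilityMeasure μ] (u : Circle) (n : ℕ) :
    μ.real {u} ^ 2 * n ≤ 1 + 2 * ∑ m ∈ Ico 1 n, ‖fourierStieltjesCoeff μ m‖ ^ 2 := by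
  rcases n with _ | N
  · simp
  set G : ℤ → ℝ := fun m => ‖fourierStieltjesCoeff μ m‖
  set A := ∑ j ∈ range (N + 1), ∑ k ∈ range (N + 1), G (j - k)
  set S := 1 + 2 * ∑ m ∈ Ico 1 (N + 1), G m ^ 2
  have hatom : ((N : ℝ) + 1) ^ 2 * μ.real {u} ≤ A := by
    simpa using sq_mul_measureReal_singleton_le_sum_norm_fourierStieltjesCoeff μ u (N + 1)
  have hCS : A ^ 2 ≤
      ((N : ℝ) + 1) ^ 2 * ∑ j ∈ range (N + 1), ∑ k ∈ range (N + 1), G (j - k) ^ 2 := by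
    have := sq_sum_le_card_mul_sum_sq (s := range (N + 1) ×ˢ range (N + 1))
      (f := fun x => G (x.1 - x.2))
    simpa [sum_product, card_product, sq] using this
  have hGeven : (fun m => G m ^ 2).Even := fun m => by
    simp [G, fourierStieltjesCoeff_neg]
  have hwindow := sum_range_sum_range_sub_le_of_even (fun m => sq_nonneg (G m)) hGeven N
  have hS : 2 * ∑ m ∈ range (N + 1), G m ^ 2 - G 0 ^ 2 = S := by
    rw [range_eq_Ico, sum_eq_sum_Ico_succ_bot (Nat.succ_pos N)]
    simp [G, S, fourierStieltjesCoeff_zero]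
    ring
  have hc : 0 ≤ μ.real {u} := measureReal_nonneg
  have hcube : ((N : ℝ) + 1) ^ 3 * (μ.real {u} ^ 2 * (N + 1)) ≤ ((N : ℝ) + 1) ^ 3 * S :=
    calc ((N : ℝ) + 1) ^ 3 * (μ.real {u} ^ 2 * (N + 1))
        = (((N : ℝ) + 1) ^ 2 * μ.real {u}) ^ 2 := by ring
      _ ≤ A ^ 2 := by gcongr
      _ ≤ ((N : ℝ) + 1) ^ 2 * ((N + 1) * S) := by
        rw [← hS]; exact hCS.trans (by gcongr)
      _ = ((N : ℝ) + 1) ^ 3 * S := by ring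
  push_cast
  exact le_of_mul_le_mul_left hcube (by positivity)

end

/-- **Atoms make the SJK expected return time finite.**
Let `μ` be a probability measure on the unit circle whose pure point part has
positive mass, i.e. `μ` has an atom.  With Fourier coefficients
`μ_n = ∫ uⁿ dμ`, `p_n = |μ_n|²` and SJK first-return probabilities
`q_n^{SJK} = p_n ∏_{k=1}^{n-1} (1 - p_k)`, the SJK expected return time
`τ^{SJK} = ∑ n q_n^{SJK}` is finite. -/
theorem SJK_expected_return_time_finite
    (μ : Measure Circle) [IsProbabilityMeasure μ]
    (hatom : ∃ u : Circle, 0 < μ {u})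
    (p q : ℕ → ℝ)
    (hp : ∀ n, p n = ‖∫ u : Circle, (u : ℂ) ^ n ∂μ‖ ^ 2)
    (hq : ∀ n, q n = p n * ∏ k ∈ Finset.Ico 1 n, (1 - p k)) :
    Summable (fun n : ℕ => (n : ℝ) * q n) := by
  obtain ⟨u, hu⟩ := hatom
  have hc : 0 < μ.real {u} := ENNReal.toReal_pos hu.ne' (measure_ne_top μ _)
  have hpμ (n : ℕ) : p n = ‖fourierStieltjesCoeff μ n‖ ^ 2 := by
    rw [hp, fourierStieltjesCoeff_natCast]
  simp_rw [hq]
  refine summable_nat_mul_mul_prod_one_sub (fun n => by rw [hpμ]; positivity)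
    (fun n => ?_) (a := μ.real {u} ^ 2 / 2) (b := 1 / 2) (by positivity) fun n => ?_
  · rw [hpμ]
    exact pow_le_one₀ (norm_nonneg _) (norm_fourierStieltjesCoeff_le_one μ n)
  · have := sq_measureReal_singleton_mul_le_sum_sq_norm_fourierStieltjesCoeff μ u n
    simp_rw [hpμ]
    linarith
end

section
/- Let U be the rotation of ℝ² ⊂ ℂ² by angle θ = π/4 and φ = (1,0). Then the 'classical' first-return coefficients q_n defined via the renewal equation q̂(z) = 1 − 1/p̂(z) from p_n = |⟨φ, Uⁿφ⟩|² satisfy q_2 = −1/4 < 0; hence the sequence (q_n) is not a probability distribution. -/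
open Real

lemma rotation_matrix_mul (α β : ℝ) :
    !![cos α, -sin α; sin α, cos α] * !![cos β, -sin β; sin β, cos β] =
      !![cos (α + β), -sin (α + β); sin (α + β), cos (α + β)] := by
  rw [Matrix.mul_fin_two, cos_add, sin_add]
  ext i j
  fin_cases i <;> fin_cases j <;>
    simp only [Fin.zero_eta, Fin.mk_one, Matrix.of_apply, Matrix.cons_val', Matrix.cons_val_zero,
      Matrix.cons_val_one, Matrix.cons_val_fin_one] <;> ring

lemma rotation_matrix_pow (θ : ℝ) (n : ℕ) :
    !![cos θ, -sin θ; sin θ, cos θ] ^ n =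
      !![cos (n * θ), -sin (n * θ); sin (n * θ), cos (n * θ)] := by
  induction n with
  | zero => simp [Matrix.one_fin_two]
  | succ n ih => rw [pow_succ, ih, rotation_matrix_mul, Nat.cast_succ, add_one_mul]

lemma dotProduct_rotation_matrix_mulVec (θ : ℝ) :
    dotProduct ![1, 0] (!![cos θ, -sin θ; sin θ, cos θ].mulVec ![1, 0]) = cos θ := by
  simp [dotProduct, Fin.sum_univ_two]

section Renewal

variable {R : Type*} [CommRing R] {p q : ℕ → R}
  (hq : ∀ n, 1 ≤ n → q n = p n - ∑ k ∈ Finset.Ico 1 n, q k * p (n - k))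
include hq

lemma renewal_coeff_one : q 1 = p 1 := by
  simp [hq 1 le_rfl]

lemma renewal_coeff_two : q 2 = p 2 - p 1 ^ 2 := by
  rw [hq 2 (by norm_num), Nat.Ico_succ_singleton, Finset.sum_singleton,
    renewal_coeff_one hq, sq]

end Renewal

theorem rotation_renewal_negative_general
    (U : Matrix (Fin 2) (Fin 2) ℝ)
    (hU : U = !![Real.cos (π / 4), -Real.sin (π / 4);
                 Real.sin (π / 4),  Real.cos (π / 4)])
    (p : ℕ → ℝ)
    (hp : ∀ n, p n = (dotProduct ![1, 0] ((U ^ n).mulVec ![1, 0])) ^ 2)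
    (q : ℕ → ℝ)
    (hq : ∀ n, 1 ≤ n → q n = p n - ∑ k ∈ Finset.Ico 1 n, q k * p (n - k)) :
    q 2 = -(1 / 4) ∧ q 2 < 0 ∧ ¬ (∀ n, 0 ≤ q n) := by
  have hp_cos (n : ℕ) : p n = cos (n * (π / 4)) ^ 2 := by
    rw [hp, hU, rotation_matrix_pow, dotProduct_rotation_matrix_mulVec]
  have hp1 : p 1 = 1 / 2 := by
    rw [hp_cos, Nat.cast_one, one_mul, cos_pi_div_four, div_pow, sq_sqrt zero_le_two]
    norm_num
  have hp2 : p 2 = 0 := by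
    rw [hp_cos, show ((2 : ℕ) : ℝ) * (π / 4) = π / 2 by push_cast; ring, cos_pi_div_two]
    norm_num
  have hq2 : q 2 = -(1 / 4) := by
    rw [renewal_coeff_two hq, hp1, hp2]
    norm_num
  have hq2_neg : q 2 < 0 := by rw [hq2]; norm_num
  exact ⟨hq2, hq2_neg, fun h => (h 2).not_gt hq2_neg⟩

/-- **Negative 'classical' first-return coefficients for the rotation by π/4.**
Let `U` be the rotation of `ℝ²` by `θ = π/4` and `φ = (1,0)`, with return
probabilities `p n = |⟨φ, Uⁿφ⟩|²` and 'classical' first-return coefficients `q n`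
defined by the renewal relation `q_n = p_n - ∑_{k=1}^{n-1} q_k p_{n-k}` (with
`q 0 = 0`).  Then `q 2 = -1/4 < 0`; hence `(q n)` is not a probability
distribution. -/
theorem rotation_renewal_negative
    (U : Matrix (Fin 2) (Fin 2) ℝ)
    (hU : U = !![Real.cos (π / 4), -Real.sin (π / 4);
                 Real.sin (π / 4),  Real.cos (π / 4)])
    (p : ℕ → ℝ)
    (hp : ∀ n, p n = (dotProduct ![1, 0] ((U ^ n).mulVec ![1, 0])) ^ 2)
    (q : ℕ → ℝ) (hq0 : q 0 = 0)
    (hq : ∀ n, 1 ≤ n → q n = p n - ∑ k ∈ Finset.Ico 1 n, q k * p (n - k)) :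
    q 2 = -(1 / 4) ∧ q 2 < 0 ∧ ¬ (∀ n, 0 ≤ q n) :=
  rotation_renewal_negative_general U hU p hp q hq
end

section
/- The Schur function f(z) = (z² − 1 + √((z²−1)² + 4|γ|²z²))/(2γ̄z²) (branch with √ → 1 as z → 0) of the coined quantum walk on ℤ₊ with constant coin parameter γ, 0 < |γ| < 1, satisfies the fixed point equation of the period-2 Schur algorithm with parameters (γ, 0, γ, 0, ...), and its L²-norm on the unit circle is ‖f‖² = (2/(π|γ|²))(ρ|γ| + (1 − 2ρ²) arcsin|γ|), where ρ = √(1 − |γ|²). -/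
/-!
Two Schur steps with parameters `γ, 0` send `f` to `(f - γ) / (z² (1 - γ̄ f))`, so the
fixed-point equation is the quadratic `γ̄ z² f² - (z² - 1) f - γ = 0`, which the given `f` solves;
`1 - γ̄ f` cannot vanish, since substituting `γ̄ f = 1` into the quadratic forces `|γ| = 1`.

On the circle `z = e^{it}` the discriminant is `4 z² (|γ|² - sin² t)`. Where `sin² t ≤ |γ|²` the
root has modulus one; elsewhere the principal square root (nonnegative real part) selects
`|f|² = (|sin t| - √(sin² t - |γ|²))² / |γ|²`. The discriminant avoids the negative real axis on
the closed disk, so `f` is continuous up to the circle away from `0` and the circle means converge.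
The limit mean reduces by symmetry to `[0, π/2]`, and the substitution `u = cos t` turns the
square-root term into the area `π (1 - |γ|²) / 4` of a quarter disk of radius `√(1 - |γ|²)`.
-/

open Real Filter Topology MeasureTheory

namespace ConstantCoin

noncomputable def disc (a : ℝ) (z : ℂ) : ℂ := (z ^ 2 - 1) ^ 2 + 4 * (a : ℂ) ^ 2 * z ^ 2

noncomputable def schur (γ z : ℂ) : ℂ :=
  (z ^ 2 - 1 + disc ‖γ‖ z ^ ((1 : ℂ) / 2)) / (2 * (starRingEnd ℂ) γ * z ^ 2)

lemma cpow_one_half_sq (w : ℂ) : (w ^ ((1 : ℂ) / 2)) ^ 2 = w := by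
  rw [one_div]; exact Complex.cpow_ofNat_inv_pow w 2

lemma re_cpow_one_half_nonneg (w : ℂ) : 0 ≤ (w ^ ((1 : ℂ) / 2)).re := by
  rw [one_div, Complex.cpow_inv_two_re]; positivity

lemma schur_quadratic {γ z : ℂ} (hγ : γ ≠ 0) (hz : z ≠ 0) :
    (starRingEnd ℂ) γ * z ^ 2 * schur γ z ^ 2 = (z ^ 2 - 1) * schur γ z + γ := by
  have hS := cpow_one_half_sq (disc ‖γ‖ z)
  have hnorm : ((‖γ‖ : ℝ) : ℂ) ^ 2 = γ * (starRingEnd ℂ) γ := by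
    rw [Complex.mul_conj, Complex.normSq_eq_norm_sq]; push_cast; ring
  have hγ' : (starRingEnd ℂ) γ ≠ 0 := by simpa using hγ
  unfold schur
  generalize disc ‖γ‖ z ^ ((1 : ℂ) / 2) = S at hS ⊢
  rw [disc, hnorm] at hS
  set F := (z ^ 2 - 1 + S) / (2 * (starRingEnd ℂ) γ * z ^ 2)
  have hF : 2 * (starRingEnd ℂ) γ * z ^ 2 * F = z ^ 2 - 1 + S :=
    mul_div_cancel₀ _ (by simp [hγ', hz])
  refine mul_left_cancel₀ (by simp [hγ', hz] : 4 * (starRingEnd ℂ) γ * z ^ 2 ≠ 0) ?_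
  linear_combination (2 * (starRingEnd ℂ) γ * z ^ 2 * F - (z ^ 2 - 1) + S) * hF + hS

lemma eq_schur_step_of_quadratic {γ z w : ℂ} (hγ : ‖γ‖ < 1) (hz : z ≠ 0)
    (hw : (starRingEnd ℂ) γ * z ^ 2 * w ^ 2 = (z ^ 2 - 1) * w + γ) :
    w = z⁻¹ * (z⁻¹ * (w - γ) / (1 - (starRingEnd ℂ) γ * w)) := by
  have hden : 1 - (starRingEnd ℂ) γ * w ≠ 0 := by
    intro h
    have hγγ : γ * (starRingEnd ℂ) γ = 1 := by
      linear_combination (-(starRingEnd ℂ) γ) * hw - ((starRingEnd ℂ) γ * z ^ 2 * w + 1) * h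
    rw [Complex.mul_conj, Complex.normSq_eq_norm_sq] at hγγ
    have : ‖γ‖ ^ 2 = 1 := by exact_mod_cast hγγ
    nlinarith [norm_nonneg γ]
  have hden' : 1 - w * (starRingEnd ℂ) γ ≠ 0 := by rwa [mul_comm]
  field_simp
  linear_combination -hw

lemma zero_le_re_disc_or_im_ne_zero {a : ℝ} (ha : a ^ 2 ≤ 1) {z : ℂ} (hz : ‖z‖ ≤ 1) :
    0 ≤ (disc a z).re ∨ (disc a z).im ≠ 0 := by
  by_contra! h
  obtain ⟨hre, him⟩ := h
  -- `disc a z < 0` would make `u` purely imaginary, and then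
  -- `‖z‖⁴ = (2a² - 1)² + u.im² > (2a² - 1)² + 4a²(1 - a²) = 1`
  set u := z ^ 2 + ((2 * a ^ 2 - 1 : ℝ) : ℂ)
  have hu : u ^ 2 = disc a z - ((4 * a ^ 2 * (1 - a ^ 2) : ℝ) : ℂ) := by
    simp only [u, disc]; push_cast; ring
  have hure : u.re ^ 2 - u.im ^ 2 = (disc a z).re - 4 * a ^ 2 * (1 - a ^ 2) := by
    simpa [sq, Complex.mul_re] using congrArg Complex.re hu
  have huim : u.re * u.im = 0 := by
    have := congrArg Complex.im hu
    simp only [sq, Complex.mul_im, Complex.sub_im, Complex.ofReal_im, him] at this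
    linarith
  have hz2 : (u.re - (2 * a ^ 2 - 1)) ^ 2 + u.im ^ 2 ≤ 1 := by
    have : Complex.normSq (z ^ 2) ≤ 1 := by
      rw [Complex.normSq_eq_norm_sq, norm_pow]
      exact pow_le_one₀ (by positivity) (pow_le_one₀ (norm_nonneg z) hz)
    simpa [u, Complex.normSq_apply, sq] using this
  have hk : 0 ≤ a ^ 2 * (1 - a ^ 2) := mul_nonneg (sq_nonneg a) (by linarith)
  rcases mul_eq_zero.1 huim with h | h
  · rw [h] at hure hz2; nlinarith
  · rw [h] at hure; nlinarith [sq_nonneg u.re]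

lemma continuousAt_schur {γ z : ℂ} (hγ : γ ≠ 0) (hγ1 : ‖γ‖ ≤ 1) (hz0 : z ≠ 0) (hz : ‖z‖ ≤ 1) :
    ContinuousAt (schur γ) z := by
  have hsqrt : ContinuousAt (fun w => disc ‖γ‖ w ^ ((1 : ℂ) / 2)) z :=
    (Complex.continuousAt_cpow_const_of_re_pos
      (zero_le_re_disc_or_im_ne_zero (pow_le_one₀ (norm_nonneg γ) hγ1) hz) (by norm_num)).comp
      (by unfold disc; fun_prop)
  exact ((continuousAt_id.pow 2).sub continuousAt_const |>.add hsqrt).div (by fun_prop)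
    (by simp [hγ, hz0])

/-- `‖schur γ (exp (I t))‖ ^ 2` in terms of `a = ‖γ‖` and `s = sin t`; since `Real.sqrt` vanishes
on negative numbers, it is `1` where `s² ≤ a²`. -/
noncomputable def boundaryNormSq (a s : ℝ) : ℝ :=
  1 + 2 / a ^ 2 * (max (s ^ 2 - a ^ 2) 0 - |s| * √(s ^ 2 - a ^ 2))

lemma exp_I_mul_eq (t : ℝ) : Complex.exp (Complex.I * t) = cos t + sin t * Complex.I := by
  rw [mul_comm, Complex.exp_mul_I, ← Complex.ofReal_cos, ← Complex.ofReal_sin]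

lemma exp_I_mul_sq_sub_one (t : ℝ) :
    Complex.exp (Complex.I * t) ^ 2 - 1 = 2 * Complex.I * sin t * Complex.exp (Complex.I * t) := by
  have h : (cos t : ℂ) ^ 2 + (sin t : ℂ) ^ 2 = 1 := by exact_mod_cast cos_sq_add_sin_sq t
  rw [exp_I_mul_eq]
  linear_combination h - (sin t : ℂ) ^ 2 * Complex.I_sq

lemma disc_exp_I_mul (a t : ℝ) :
    disc a (Complex.exp (Complex.I * t)) =
      (2 * Complex.exp (Complex.I * t)) ^ 2 * ((a ^ 2 - sin t ^ 2 : ℝ) : ℂ) := by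
  rw [disc, exp_I_mul_sq_sub_one, Complex.ofReal_sub, Complex.ofReal_pow, Complex.ofReal_pow]
  linear_combination (4 * sin t ^ 2 * Complex.exp (Complex.I * t) ^ 2 : ℂ) * Complex.I_sq

lemma norm_sq_two_mul_I_add_of_sq_le {a s : ℝ} {z S : ℂ} (hz : ‖z‖ = 1) (hsa : s ^ 2 ≤ a ^ 2)
    (hS : S ^ 2 = (2 * z) ^ 2 * ((a ^ 2 - s ^ 2 : ℝ) : ℂ)) :
    ‖2 * Complex.I * s * z + S‖ ^ 2 = 4 * a ^ 2 := by
  set b := √(a ^ 2 - s ^ 2)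
  have hb : b ^ 2 = a ^ 2 - s ^ 2 := sq_sqrt (by linarith)
  have hSb : S ^ 2 = (2 * z * b) ^ 2 := by
    rw [hS, ← hb]; push_cast; ring
  rcases sq_eq_sq_iff_eq_or_eq_neg.1 hSb with rfl | rfl
  · rw [show 2 * Complex.I * s * z + 2 * z * b = 2 * z * (b + s * Complex.I) by ring,
      norm_mul, norm_mul, hz, mul_pow, Complex.sq_norm, Complex.normSq_add_mul_I]
    norm_num; linarith
  · rw [show 2 * Complex.I * s * z + -(2 * z * b) = 2 * z * ((-b : ℝ) + s * Complex.I) by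
        push_cast; ring,
      norm_mul, norm_mul, hz, mul_pow, Complex.sq_norm, Complex.normSq_add_mul_I]
    norm_num; linarith

lemma norm_sq_two_mul_I_add_of_lt_sq {a s : ℝ} {z S : ℂ} (hz : ‖z‖ = 1) (hzim : z.im = s)
    (hsa : a ^ 2 < s ^ 2) (hS : S ^ 2 = (2 * z) ^ 2 * ((a ^ 2 - s ^ 2 : ℝ) : ℂ))
    (hre : 0 ≤ S.re) :
    ‖2 * Complex.I * s * z + S‖ ^ 2 = 4 * (|s| - √(s ^ 2 - a ^ 2)) ^ 2 := by
  set h := √(s ^ 2 - a ^ 2)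
  have hh : h ^ 2 = s ^ 2 - a ^ 2 := sq_sqrt (by linarith)
  have hhpos : 0 < h := sqrt_pos.2 (by linarith)
  have hSh : S ^ 2 = (2 * Complex.I * h * z) ^ 2 := by
    rw [hS, show a ^ 2 - s ^ 2 = -h ^ 2 by linarith]; push_cast
    linear_combination (-4 * (h : ℂ) ^ 2 * z ^ 2) * Complex.I_sq
  -- `Re S ≥ 0` selects the root whose sign is opposite to that of `s`
  rcases sq_eq_sq_iff_eq_or_eq_neg.1 hSh with rfl | rfl <;>
    simp only [Complex.neg_re, Complex.mul_re, Complex.mul_im, Complex.I_re, Complex.I_im,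
      Complex.ofReal_re, Complex.ofReal_im, Complex.re_ofNat, Complex.im_ofNat, hzim] at hre
  · have hs : s ≤ 0 := by nlinarith
    rw [show 2 * Complex.I * s * z + 2 * Complex.I * h * z = 2 * Complex.I * z * ((s + h : ℝ))
        by push_cast; ring, norm_mul, norm_mul, norm_mul, hz, Complex.norm_real, Complex.norm_I,
      Complex.norm_ofNat, mul_pow, Real.norm_eq_abs, sq_abs, abs_of_nonpos hs]
    ring
  · have hs : 0 ≤ s := by nlinarith
    rw [show 2 * Complex.I * s * z + -(2 * Complex.I * h * z) = 2 * Complex.I * z * ((s - h : ℝ))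
        by push_cast; ring, norm_mul, norm_mul, norm_mul, hz, Complex.norm_real, Complex.norm_I,
      Complex.norm_ofNat, mul_pow, Real.norm_eq_abs, sq_abs, abs_of_nonneg hs]
    ring

lemma norm_sq_exp_I_mul_sq_sub_one_add {a : ℝ} (ha : 0 < a) (t : ℝ) {S : ℂ}
    (hS : S ^ 2 = disc a (Complex.exp (Complex.I * t))) (hre : 0 ≤ S.re) :
    ‖Complex.exp (Complex.I * t) ^ 2 - 1 + S‖ ^ 2 = 4 * a ^ 2 * boundaryNormSq a (sin t) := by
  have hz : ‖Complex.exp (Complex.I * t)‖ = 1 := by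
    rw [mul_comm]; exact Complex.norm_exp_ofReal_mul_I t
  have hzim : (Complex.exp (Complex.I * t)).im = sin t := by
    rw [mul_comm]; exact Complex.exp_ofReal_mul_I_im t
  rw [disc_exp_I_mul] at hS
  rw [exp_I_mul_sq_sub_one]
  rcases le_or_gt (sin t ^ 2) (a ^ 2) with hsa | hsa
  · rw [norm_sq_two_mul_I_add_of_sq_le hz hsa hS, boundaryNormSq,
      max_eq_right (sub_nonpos.2 hsa), sqrt_eq_zero'.2 (sub_nonpos.2 hsa)]
    ring
  · rw [norm_sq_two_mul_I_add_of_lt_sq hz hzim hsa hS hre, boundaryNormSq,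
      max_eq_left (by linarith)]
    have hh : √(sin t ^ 2 - a ^ 2) ^ 2 = sin t ^ 2 - a ^ 2 := sq_sqrt (by linarith)
    field_simp
    nlinarith [sq_abs (sin t)]

lemma norm_sq_schur_exp_I_mul {γ : ℂ} (hγ : γ ≠ 0) (t : ℝ) :
    ‖schur γ (Complex.exp (Complex.I * t))‖ ^ 2 = boundaryNormSq ‖γ‖ (sin t) := by
  have hz : ‖Complex.exp (Complex.I * t)‖ = 1 := by
    rw [mul_comm]; exact Complex.norm_exp_ofReal_mul_I t
  have hγ' : 0 < ‖γ‖ := norm_pos_iff.2 hγ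
  rw [schur, norm_div, div_pow, norm_sq_exp_I_mul_sq_sub_one_add hγ' t (cpow_one_half_sq _)
    (re_cpow_one_half_nonneg _), norm_mul, norm_mul, norm_pow, hz, Complex.norm_conj,
    Complex.norm_ofNat]
  field_simp
  ring

lemma integral_comp_sin_eq_four_mul {E : Type*} [NormedAddCommGroup E] [NormedSpace ℝ E]
    {h : ℝ → E} (hc : Continuous h) (heven : ∀ s, h (-s) = h s) :
    ∫ t in (0 : ℝ)..2 * π, h (sin t) = (4 : ℝ) • ∫ t in (0 : ℝ)..π / 2, h (sin t) := by
  have hint : ∀ u v : ℝ, IntervalIntegrable (fun t => h (sin t)) MeasureTheory.volume u v :=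
    fun u v => (hc.comp continuous_sin).intervalIntegrable u v
  have hshift : ∫ t in π..2 * π, h (sin t) = ∫ t in (0 : ℝ)..π, h (sin t) := by
    simpa [sin_add_pi, heven, two_mul] using
      (intervalIntegral.integral_comp_add_right (fun t => h (sin t)) π (a := 0) (b := π)).symm
  have hrefl : ∫ t in π / 2..π, h (sin t) = ∫ t in (0 : ℝ)..π / 2, h (sin t) := by
    have := intervalIntegral.integral_comp_sub_left (fun t => h (sin t)) π (a := 0) (b := π / 2)
    simp only [sin_pi_sub, sub_zero, show π - π / 2 = π / 2 by ring] at this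
    exact this.symm
  rw [← intervalIntegral.integral_add_adjacent_intervals (hint 0 π) (hint π (2 * π)), hshift,
    ← intervalIntegral.integral_add_adjacent_intervals (hint 0 (π / 2)) (hint (π / 2) π), hrefl]
  module

lemma integral_sqrt_sq_sub_sq {ρ : ℝ} (hρ : 0 ≤ ρ) :
    ∫ u in (0 : ℝ)..ρ, √(ρ ^ 2 - u ^ 2) = π * ρ ^ 2 / 4 := by
  rcases hρ.eq_or_lt with rfl | hρ
  · simp
  have hhalf : ∫ v in (0 : ℝ)..1, √(1 - v ^ 2) = π / 4 := by
    have hint (u v : ℝ) : IntervalIntegrable (fun v : ℝ => √(1 - v ^ 2)) volume u v :=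
      (by fun_prop : Continuous fun v : ℝ => √(1 - v ^ 2)).intervalIntegrable u v
    have hneg : ∫ v in (-1 : ℝ)..0, √(1 - v ^ 2) = ∫ v in (0 : ℝ)..1, √(1 - v ^ 2) := by
      have := intervalIntegral.integral_comp_neg (fun v : ℝ => √(1 - v ^ 2)) (a := 0) (b := 1)
      simp only [neg_zero, even_two, Even.neg_pow] at this
      exact this.symm
    have := integral_sqrt_one_sub_sq
    rw [← intervalIntegral.integral_add_adjacent_intervals (hint (-1) 0) (hint 0 1), hneg] at this
    linarith
  have hscale := intervalIntegral.integral_comp_mul_left (fun u => √(ρ ^ 2 - u ^ 2)) hρ.ne'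
    (a := 0) (b := 1)
  have hfactor : ∀ v : ℝ, √(ρ ^ 2 - (ρ * v) ^ 2) = ρ * √(1 - v ^ 2) := fun v => by
    rw [show ρ ^ 2 - (ρ * v) ^ 2 = ρ ^ 2 * (1 - v ^ 2) by ring, sqrt_mul (sq_nonneg ρ),
      sqrt_sq hρ.le]
  simp only [hfactor, intervalIntegral.integral_const_mul, hhalf, mul_zero, mul_one,
    smul_eq_mul] at hscale
  field_simp at hscale
  linarith

lemma integral_sin_mul_sqrt_sin_sq_sub_sq {a : ℝ} (ha0 : 0 ≤ a) (ha1 : a ≤ 1) :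
    ∫ t in arcsin a..π / 2, sin t * √(sin t ^ 2 - a ^ 2) = π * (1 - a ^ 2) / 4 := by
  have hsub := intervalIntegral.integral_comp_mul_deriv (a := arcsin a) (b := π / 2)
    (f := cos) (f' := fun t => -sin t) (g := fun u => √(1 - a ^ 2 - u ^ 2))
    (fun t _ => hasDerivAt_cos t) (by fun_prop) (by fun_prop)
  have hdisk := integral_sqrt_sq_sub_sq (sqrt_nonneg (1 - a ^ 2))
  rw [sq_sqrt (by nlinarith)] at hdisk
  rw [cos_pi_div_two, cos_arcsin, intervalIntegral.integral_symm 0, hdisk] at hsub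
  rw [← neg_neg (π * (1 - a ^ 2) / 4), ← hsub, ← intervalIntegral.integral_neg]
  refine intervalIntegral.integral_congr fun t _ => ?_
  simp only [Function.comp, sin_sq t]
  ring_nf

lemma integral_boundaryNormSq_quarter {a : ℝ} (ha0 : 0 < a) (ha1 : a ≤ 1) :
    ∫ t in (0 : ℝ)..π / 2, boundaryNormSq a (sin t) =
      (a * √(1 - a ^ 2) + (2 * a ^ 2 - 1) * arcsin a) / a ^ 2 := by
  set α := arcsin a
  have hα0 : 0 ≤ α := arcsin_nonneg.2 ha0.le
  have hαπ : α ≤ π / 2 := arcsin_le_pi_div_two a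
  have hsinα : sin α = a := sin_arcsin (by linarith) ha1
  have hcont : Continuous fun t => boundaryNormSq a (sin t) := by
    unfold boundaryNormSq; fun_prop
  have hflat : ∫ t in (0 : ℝ)..α, boundaryNormSq a (sin t) = α := by
    rw [intervalIntegral.integral_congr (g := fun _ => (1 : ℝ)), intervalIntegral.integral_const,
      smul_eq_mul, mul_one, sub_zero]
    intro t ht
    rw [Set.uIcc_of_le hα0] at ht
    have hs0 : 0 ≤ sin t := sin_nonneg_of_nonneg_of_le_pi ht.1 (by linarith [pi_pos, ht.2])
    have hsa : sin t ≤ a :=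
      hsinα ▸ sin_le_sin_of_le_of_le_pi_div_two (by linarith [pi_pos, ht.1]) hαπ ht.2
    have hle : sin t ^ 2 - a ^ 2 ≤ 0 := by nlinarith
    simp [boundaryNormSq, max_eq_right hle, sqrt_eq_zero'.2 hle]
  have hbulk : ∫ t in α..π / 2, boundaryNormSq a (sin t) =
      ∫ t in α..π / 2,
        (-1 + 2 / a ^ 2 * sin t ^ 2 - 2 / a ^ 2 * (sin t * √(sin t ^ 2 - a ^ 2))) := by
    refine intervalIntegral.integral_congr fun t ht => ?_
    rw [Set.uIcc_of_le hαπ] at ht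
    have has : a ≤ sin t :=
      hsinα ▸ sin_le_sin_of_le_of_le_pi_div_two (by linarith [pi_pos]) ht.2 ht.1
    simp only [boundaryNormSq, max_eq_left (by nlinarith : 0 ≤ sin t ^ 2 - a ^ 2),
      abs_of_nonneg (ha0.le.trans has)]
    field_simp
    ring
  rw [← intervalIntegral.integral_add_adjacent_intervals (hcont.intervalIntegrable 0 α)
    (hcont.intervalIntegrable α (π / 2)), hflat, hbulk,
    intervalIntegral.integral_sub (by apply Continuous.intervalIntegrable; fun_prop)
      (by apply Continuous.intervalIntegrable; fun_prop),
    intervalIntegral.integral_add intervalIntegrable_const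
      (by apply Continuous.intervalIntegrable; fun_prop),
    intervalIntegral.integral_const_mul, intervalIntegral.integral_const_mul,
    integral_sin_sq, integral_sin_mul_sqrt_sin_sq_sub_sq ha0.le ha1,
    intervalIntegral.integral_const,
    hsinα, cos_arcsin, sin_pi_div_two, cos_pi_div_two]
  field_simp
  ring

lemma mean_boundaryNormSq {a : ℝ} (ha0 : 0 < a) (ha1 : a ≤ 1) :
    1 / (2 * π) * ∫ t in (0 : ℝ)..2 * π, boundaryNormSq a (sin t) =
      2 / (π * a ^ 2) * (√(1 - a ^ 2) * a + (1 - 2 * √(1 - a ^ 2) ^ 2) * arcsin a) := by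
  have heven : ∀ s, boundaryNormSq a (-s) = boundaryNormSq a s := fun s => by
    simp only [boundaryNormSq, neg_sq, abs_neg]
  rw [integral_comp_sin_eq_four_mul (by unfold boundaryNormSq; fun_prop) heven,
    integral_boundaryNormSq_quarter ha0 ha1, smul_eq_mul, sq_sqrt (by nlinarith)]
  field_simp
  ring

lemma norm_ofReal_mul_exp_I_mul (r t : ℝ) : ‖(r : ℂ) * Complex.exp (Complex.I * t)‖ = |r| := by
  rw [norm_mul, mul_comm Complex.I, Complex.norm_exp_ofReal_mul_I, mul_one, Complex.norm_real,
    Real.norm_eq_abs]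

lemma tendsto_integral_circle_of_continuousOn {E : Type*} [NormedAddCommGroup E]
    [NormedSpace ℝ E] {g : ℂ → E} {r₀ : ℝ} (hr₀ : 0 ≤ r₀) (hr₀1 : r₀ < 1)
    (hg : ContinuousOn g {z | r₀ ≤ ‖z‖ ∧ ‖z‖ ≤ 1}) :
    Tendsto (fun r : ℝ => ∫ t in (0 : ℝ)..2 * π, g (r * Complex.exp (Complex.I * t)))
      (𝓝[<] 1) (𝓝 (∫ t in (0 : ℝ)..2 * π, g (Complex.exp (Complex.I * t)))) := by
  -- clamping the radius to `[r₀, 1]` makes the integrand jointly continuous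
  set clamp : ℝ → ℝ := fun r => max r₀ (min r 1)
  have hcont : Continuous fun p : ℝ × ℝ => g (clamp p.1 * Complex.exp (Complex.I * p.2)) := by
    refine hg.comp_continuous (by fun_prop) fun p => ?_
    have hclamp : r₀ ≤ clamp p.1 ∧ clamp p.1 ≤ 1 :=
      ⟨le_max_left _ _, max_le hr₀1.le (min_le_right _ _)⟩
    rwa [Set.mem_ofPred_eq, norm_ofReal_mul_exp_I_mul, abs_of_nonneg (hr₀.trans hclamp.1)]
  have hlim := ((intervalIntegral.continuous_parametric_intervalIntegral_of_continuous'
    (μ := volume) (f := fun r t => g (clamp r * Complex.exp (Complex.I * t))) hcont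
    0 (2 * π)).tendsto 1).mono_left (nhdsWithin_le_nhds (s := Set.Iio 1))
  have hclamp1 : clamp 1 = 1 := by simp [clamp, hr₀1.le]
  simp only [hclamp1, Complex.ofReal_one, one_mul] at hlim
  refine hlim.congr' ?_
  filter_upwards [Ioo_mem_nhdsLT hr₀1] with r hr
  simp [clamp, hr.1.le, hr.2.le]

end ConstantCoin

open ConstantCoin in
theorem constant_coin_schur_function_general
    (γ : ℂ) (hγ0 : γ ≠ 0) (hγ1 : ‖γ‖ < 1)
    (f : ℂ → ℂ)
    (hf : ∀ z : ℂ, z ≠ 0 → ‖z‖ < 1 →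
      f z = (z ^ 2 - 1 +
          ((z ^ 2 - 1) ^ 2 + 4 * ((‖γ‖ : ℂ)) ^ 2 * z ^ 2) ^ ((1 : ℂ) / 2)) /
        (2 * (starRingEnd ℂ) γ * z ^ 2)) :
    (∀ z : ℂ, z ≠ 0 → ‖z‖ < 1 →
        f z = z⁻¹ * (z⁻¹ * (f z - γ) / (1 - (starRingEnd ℂ) γ * f z))) ∧
      Tendsto
        (fun r : ℝ => (1 / (2 * π)) *
          ∫ t in (0 : ℝ)..(2 * π), ‖f ((r : ℂ) * Complex.exp (Complex.I * (t : ℂ)))‖ ^ 2)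
        (nhdsWithin 1 (Set.Iio 1))
        (nhds ((2 / (π * ‖γ‖ ^ 2)) *
          (Real.sqrt (1 - ‖γ‖ ^ 2) * ‖γ‖ +
            (1 - 2 * Real.sqrt (1 - ‖γ‖ ^ 2) ^ 2) * Real.arcsin ‖γ‖))) := by
  have hf_schur : ∀ z : ℂ, z ≠ 0 → ‖z‖ < 1 → f z = schur γ z := hf
  refine ⟨fun z hz hz1 => ?_, ?_⟩
  · rw [hf_schur z hz hz1]
    exact eq_schur_step_of_quadratic hγ1 hz (schur_quadratic hγ0 hz)
  have hcont : ContinuousOn (fun z => ‖schur γ z‖ ^ 2) {z | 1 / 2 ≤ ‖z‖ ∧ ‖z‖ ≤ 1} :=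
    fun z hz => ((continuousAt_schur hγ0 hγ1.le (norm_pos_iff.1 (by linarith [hz.1])) hz.2).norm.pow
      2).continuousWithinAt
  have hlim := (tendsto_integral_circle_of_continuousOn (by norm_num) (by norm_num) hcont).const_mul
    (1 / (2 * π))
  simp only [norm_sq_schur_exp_I_mul hγ0, mean_boundaryNormSq (norm_pos_iff.2 hγ0) hγ1.le] at hlim
  refine hlim.congr' ?_
  filter_upwards [Ioo_mem_nhdsLT (zero_lt_one' ℝ)] with r hr
  congr 1
  refine intervalIntegral.integral_congr fun t _ => ?_
  have hnorm : ‖(r : ℂ) * Complex.exp (Complex.I * t)‖ = r := by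
    rw [norm_ofReal_mul_exp_I_mul, abs_of_pos hr.1]
  rw [hf_schur _ (norm_pos_iff.1 (by rw [hnorm]; exact hr.1)) (by rw [hnorm]; exact hr.2)]

/-- **Schur function of the coined walk on `ℤ₊` with constant coin.**
For `0 < |γ| < 1` let
`f(z) = (z² - 1 + √((z²-1)² + 4|γ|²z²)) / (2 conj(γ) z²)`
(the branch with `√ → 1` as `z → 0`; the discriminant omits `(-∞,0]` on the open
disk, so the principal square root gives this branch, and `f(0) = γ`).
Then `f` satisfies the fixed point equation of the period-2 Schur algorithm with
parameters `(γ, 0, γ, 0, …)`, i.e. `f = f₂` where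
`f₁(z) = z⁻¹ (f(z) - γ)/(1 - conj(γ) f(z))` and `f₂(z) = z⁻¹ f₁(z)`, and its
`L²`-norm on the unit circle (as the limit of the means over circles of radius
`r → 1⁻`) is `‖f‖² = (2/(π|γ|²)) (ρ|γ| + (1 - 2ρ²) arcsin|γ|)` with
`ρ = √(1 - |γ|²)`. -/
theorem constant_coin_schur_function
    (γ : ℂ) (hγ0 : γ ≠ 0) (hγ1 : ‖γ‖ < 1)
    (f : ℂ → ℂ) (hf0 : f 0 = γ)
    (hf : ∀ z : ℂ, z ≠ 0 → ‖z‖ < 1 →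
      f z = (z ^ 2 - 1 +
          ((z ^ 2 - 1) ^ 2 + 4 * ((‖γ‖ : ℂ)) ^ 2 * z ^ 2) ^ ((1 : ℂ) / 2)) /
        (2 * (starRingEnd ℂ) γ * z ^ 2)) :
    (∀ z : ℂ, z ≠ 0 → ‖z‖ < 1 →
        f z = z⁻¹ * (z⁻¹ * (f z - γ) / (1 - (starRingEnd ℂ) γ * f z))) ∧
      Tendsto
        (fun r : ℝ => (1 / (2 * π)) *
          ∫ t in (0 : ℝ)..(2 * π), ‖f ((r : ℂ) * Complex.exp (Complex.I * (t : ℂ)))‖ ^ 2)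
        (nhdsWithin 1 (Set.Iio 1))
        (nhds ((2 / (π * ‖γ‖ ^ 2)) *
          (Real.sqrt (1 - ‖γ‖ ^ 2) * ‖γ‖ +
            (1 - 2 * Real.sqrt (1 - ‖γ‖ ^ 2) ^ 2) * Real.arcsin ‖γ‖))) :=
  constant_coin_schur_function_general γ hγ0 hγ1 f hf
end
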